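/- Over the 3-periodic billiard family, the locus of the circumcenter X₃⊙ of the center-inversive triangle is the ellipse obtained by scaling the elliptic locus of the circumcenter X₃ of the 3-periodics by the factor 1/δ, where δ = √(a⁴ − a²b² + b⁴); equivalently, for each orbit, X₃⊙ = X₃/δ (as vectors from the billiard center), using the fact that the power of the billiard center with respect to the circumcircle of every 3-periodic equals −δ. -/

import Mathlib

noncomputable section

namespace BilliardInv

/-- A point of the plane. -/
abbrev Pt := ℝ × ℝ

/-- Euclidean dot product. -/
def dot (p q : Pt) : ℝ := p.1 * q.1 + p.2 * q.2

/-- Euclidean distance. -/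
def dst (p q : Pt) : ℝ := Real.sqrt ((p.1 - q.1) ^ 2 + (p.2 - q.2) ^ 2)

/-- Membership in the ellipse x²/a² + y²/b² = 1. -/
def onEllipse (a b : ℝ) (p : Pt) : Prop := p.1 ^ 2 / a ^ 2 + p.2 ^ 2 / b ^ 2 = 1

/-- Half the gradient of f(x,y) = x²/a² + y²/b² (an outward normal direction). -/
def nrm (a b : ℝ) (p : Pt) : Pt := (p.1 / a ^ 2, p.2 / b ^ 2)

/-- Unit vector pointing from `v` toward `q`. -/
def udir (v q : Pt) : Pt := (dst v q)⁻¹ • (q - v)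

/-- The billiard reflection law at vertex `v` with neighboring vertices `q`, `r`:
the two adjacent sides make equal angles with the ellipse normal at `v`. -/
def reflectAt (a b : ℝ) (q v r : Pt) : Prop :=
  dot (udir v q) (nrm a b v) = dot (udir v r) (nrm a b v)

/-- A 3-periodic billiard orbit in the ellipse with semi-axes `a > b > 0`:
a nondegenerate triangle inscribed in the ellipse obeying the reflection
law at each vertex. -/
structure Orbit3 (a b : ℝ) : Type where
  P1 : Pt
  P2 : Pt
  P3 : Pt
  h1 : onEllipse a b P1
  h2 : onEllipse a b P2
  h3 : onEllipse a b P3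
  d12 : P1 ≠ P2
  d23 : P2 ≠ P3
  d31 : P3 ≠ P1
  r1 : reflectAt a b P3 P1 P2
  r2 : reflectAt a b P1 P2 P3
  r3 : reflectAt a b P2 P3 P1

/-- Inversion of `p` with respect to the circle of radius `ρ` centered at `f`. -/
def inva (ρ : ℝ) (f p : Pt) : Pt :=
  f + (ρ ^ 2 / ((p.1 - f.1) ^ 2 + (p.2 - f.2) ^ 2)) • (p - f)

/-- Unsigned area of a triangle. -/
def area (A B C : Pt) : ℝ :=
  |(B.1 - A.1) * (C.2 - A.2) - (B.2 - A.2) * (C.1 - A.1)| / 2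

/-- The point with barycentric coordinates wA : wB : wC w.r.t. triangle ABC. -/
def bary (wA wB wC : ℝ) (A B C : Pt) : Pt :=
  (wA + wB + wC)⁻¹ • (wA • A + wB • B + wC • C)

/-- Side length a = |BC|. -/
def sA (A B C : Pt) : ℝ := dst B C
/-- Side length b = |CA|. -/
def sB (A B C : Pt) : ℝ := dst C A
/-- Side length c = |AB|. -/
def sC (A B C : Pt) : ℝ := dst A B

/-- Incenter X(1). -/
def incenter (A B C : Pt) : Pt := bary (sA A B C) (sB A B C) (sC A B C) A B C

/-- Barycenter (centroid) X(2). -/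
def centroid (A B C : Pt) : Pt := bary 1 1 1 A B C

/-- Circumcenter X(3), via its barycentric coordinates a²(b²+c²−a²) : · : ·. -/
def circumcenter (A B C : Pt) : Pt :=
  bary (sA A B C ^ 2 * (sB A B C ^ 2 + sC A B C ^ 2 - sA A B C ^ 2))
       (sB A B C ^ 2 * (sC A B C ^ 2 + sA A B C ^ 2 - sB A B C ^ 2))
       (sC A B C ^ 2 * (sA A B C ^ 2 + sB A B C ^ 2 - sC A B C ^ 2)) A B C

/-- Orthocenter X(4) = A + B + C − 2·(circumcenter). -/
def orthocenter (A B C : Pt) : Pt := A + B + C - (2 : ℝ) • circumcenter A B C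

/-- Nine-point center X(5): midpoint of circumcenter and orthocenter. -/
def ninePointCenter (A B C : Pt) : Pt :=
  ((1 : ℝ) / 2) • (circumcenter A B C + orthocenter A B C)

/-- Gergonne point X(7), barycentrics 1/(b+c−a) : 1/(c+a−b) : 1/(a+b−c). -/
def gergonne (A B C : Pt) : Pt :=
  bary (sB A B C + sC A B C - sA A B C)⁻¹
       (sC A B C + sA A B C - sB A B C)⁻¹
       (sA A B C + sB A B C - sC A B C)⁻¹ A B C

/-- Mittenpunkt X(9), barycentrics a(b+c−a) : b(c+a−b) : c(a+b−c). -/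
def mittenpunkt (A B C : Pt) : Pt :=
  bary (sA A B C * (sB A B C + sC A B C - sA A B C))
       (sB A B C * (sC A B C + sA A B C - sB A B C))
       (sC A B C * (sA A B C + sB A B C - sC A B C)) A B C

/-- Feuerbach point X(11), barycentrics (b+c−a)(b−c)² : · : ·. -/
def feuerbach (A B C : Pt) : Pt :=
  bary ((sB A B C + sC A B C - sA A B C) * (sB A B C - sC A B C) ^ 2)
       ((sC A B C + sA A B C - sB A B C) * (sC A B C - sA A B C) ^ 2)
       ((sA A B C + sB A B C - sC A B C) * (sA A B C - sB A B C) ^ 2) A B C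

/-- Triangle center X(100), barycentrics a/(b−c) : b/(c−a) : c/(a−b). -/
def X100 (A B C : Pt) : Pt :=
  bary (sA A B C / (sB A B C - sC A B C))
       (sB A B C / (sC A B C - sA A B C))
       (sC A B C / (sA A B C - sB A B C)) A B C

/-- Orthogonal projection of `Q` onto the line through `A` and `B`. -/
def projLine (Q A B : Pt) : Pt :=
  A + (dot (Q - A) (B - A) / dot (B - A) (B - A)) • (B - A)

/-- Unsigned area of the pedal triangle of `Q` w.r.t. triangle `A B C`. -/
def pedalArea (Q A B C : Pt) : ℝ :=
  area (projLine Q A B) (projLine Q B C) (projLine Q C A)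

end BilliardInv

/-
The circumcircle of the orbit has center `X` and squared radius `R²`, and the power of the
billiard center `O` with respect to it is `k = |OX|² - R² = -δ ≠ 0`. Inversion in the unit
circle maps this circle to the circle of center `X / k` and squared radius `R² / k²`: for `P` on
the circle, `|X / k - P / |P|²|² - R² / k²` is a multiple of `|X|² - |X - P|² - k = 0`.
The inverted vertices are three distinct points of that circle, hence not collinear, so its
center is their circumcenter. The orbit itself is not collinear because `(x, y) ↦ (x / a, y / b)`
carries the ellipse onto the unit circle.
-/

namespace BilliardInv

lemma dst_sq (p q : Pt) : dst p q ^ 2 = (p.1 - q.1) ^ 2 + (p.2 - q.2) ^ 2 :=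
  Real.sq_sqrt (by positivity)

lemma eq_of_sub_sq_add_sub_sq_eq_zero {p q : Pt}
    (h : (p.1 - q.1) ^ 2 + (p.2 - q.2) ^ 2 = 0) : p = q := by
  have h1 : p.1 - q.1 = 0 := by nlinarith [sq_nonneg (p.1 - q.1), sq_nonneg (p.2 - q.2)]
  have h2 : p.2 - q.2 = 0 := by nlinarith [sq_nonneg (p.1 - q.1), sq_nonneg (p.2 - q.2)]
  exact Prod.ext (sub_eq_zero.mp h1) (sub_eq_zero.mp h2)

def cross (A B C : Pt) : ℝ := (B.1 - A.1) * (C.2 - A.2) - (B.2 - A.2) * (C.1 - A.1)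

lemma ne_of_cross_ne_zero {A B C : Pt} (h : cross A B C ≠ 0) : A ≠ B ∧ B ≠ C ∧ C ≠ A := by
  refine ⟨?_, ?_, ?_⟩ <;> rintro rfl <;> exact h (by unfold cross; ring)

lemma cross_ne_zero_of_dst_sq_eq {Y A B C : Pt} (hAB : A ≠ B) (hBC : B ≠ C) (hCA : C ≠ A)
    (hB : dst Y A ^ 2 = dst Y B ^ 2) (hC : dst Y A ^ 2 = dst Y C ^ 2) :
    cross A B C ≠ 0 := by
  intro h0
  rw [dst_sq, dst_sq] at hB hC
  unfold cross at h0
  obtain ⟨y1, y2⟩ := Y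
  obtain ⟨a1, a2⟩ := A
  obtain ⟨p1, p2⟩ := B
  obtain ⟨q1, q2⟩ := C
  simp only at hB hC h0
  -- `abc = 4RK`: the product of the squared sides vanishes with the area.
  have hprod : ((p1 - a1) ^ 2 + (p2 - a2) ^ 2) * ((q1 - a1) ^ 2 + (q2 - a2) ^ 2)
      * ((q1 - p1) ^ 2 + (q2 - p2) ^ 2) = 0 := by
    linear_combination ((q1 - a1) ^ 2 + (q2 - a2) ^ 2) *
        (2 * ((p1 - a1) * (y2 - a2) - (p2 - a2) * (y1 - a1)) * h0
          - ((p1 - a1) ^ 2 + (p2 - a2) ^ 2) * hC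
          + ((p1 - a1) * (q1 - a1) + (p2 - a2) * (q2 - a2)) * hB)
      + ((p1 - a1) ^ 2 + (p2 - a2) ^ 2) *
        (-2 * ((q1 - a1) * (y2 - a2) - (q2 - a2) * (y1 - a1)) * h0
          - ((q1 - a1) ^ 2 + (q2 - a2) ^ 2) * hB
          + ((p1 - a1) * (q1 - a1) + (p2 - a2) * (q2 - a2)) * hC)
  rcases mul_eq_zero.mp hprod with hBA_CA | hCB
  · rcases mul_eq_zero.mp hBA_CA with hBA | hCA'
    · exact hAB (eq_of_sub_sq_add_sub_sq_eq_zero hBA).symm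
    · exact hCA (eq_of_sub_sq_add_sub_sq_eq_zero hCA')
  · exact hBC (eq_of_sub_sq_add_sub_sq_eq_zero hCB).symm

lemma dot_smul_left (c : ℝ) (p q : Pt) : dot (c • p) q = c * dot p q := by
  simp only [dot, Prod.smul_fst, Prod.smul_snd, smul_eq_mul]; ring

lemma dst_sq_sub_dst_sq (Y A B : Pt) :
    dst Y A ^ 2 - dst Y B ^ 2 = 2 * dot Y (B - A) - (dot B B - dot A A) := by
  simp only [dst_sq, dot, Prod.fst_sub, Prod.snd_sub]
  ring

lemma circumcenter_weights_sum (A B C : Pt) :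
    sA A B C ^ 2 * (sB A B C ^ 2 + sC A B C ^ 2 - sA A B C ^ 2)
      + sB A B C ^ 2 * (sC A B C ^ 2 + sA A B C ^ 2 - sB A B C ^ 2)
      + sC A B C ^ 2 * (sA A B C ^ 2 + sB A B C ^ 2 - sC A B C ^ 2)
    = 4 * cross A B C ^ 2 := by
  simp only [sA, sB, sC, dst_sq, cross]
  ring

lemma two_mul_dot_circumcenter {A B C : Pt} (h : cross A B C ≠ 0) :
    2 * dot (circumcenter A B C) (B - A) = dot B B - dot A A ∧
      2 * dot (circumcenter A B C) (C - A) = dot C C - dot A A := by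
  unfold circumcenter bary
  rw [circumcenter_weights_sum, dot_smul_left, dot_smul_left, inv_mul_eq_div, inv_mul_eq_div,
    mul_div_assoc', mul_div_assoc', div_eq_iff (by positivity), div_eq_iff (by positivity)]
  simp only [dot, Prod.fst_add, Prod.snd_add, Prod.smul_fst, Prod.smul_snd,
    Prod.fst_sub, Prod.snd_sub, smul_eq_mul, sA, sB, sC, dst_sq, cross]
  constructor <;> ring

lemma eq_of_dot_sub_eq {A B C X Y : Pt} (h : cross A B C ≠ 0)
    (hB : dot X (B - A) = dot Y (B - A)) (hC : dot X (C - A) = dot Y (C - A)) : X = Y := by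
  simp only [dot, cross, Prod.fst_sub, Prod.snd_sub] at h hB hC
  have h1 : (X.1 - Y.1) * ((B.1 - A.1) * (C.2 - A.2) - (B.2 - A.2) * (C.1 - A.1)) = 0 := by
    linear_combination (C.2 - A.2) * hB - (B.2 - A.2) * hC
  have h2 : (X.2 - Y.2) * ((B.1 - A.1) * (C.2 - A.2) - (B.2 - A.2) * (C.1 - A.1)) = 0 := by
    linear_combination (B.1 - A.1) * hC - (C.1 - A.1) * hB
  exact Prod.ext (sub_eq_zero.mp ((mul_eq_zero.mp h1).resolve_right h))
    (sub_eq_zero.mp ((mul_eq_zero.mp h2).resolve_right h))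

lemma dst_circumcenter_sq {A B C : Pt} (h : cross A B C ≠ 0) :
    dst (circumcenter A B C) A ^ 2 = dst (circumcenter A B C) B ^ 2 ∧
      dst (circumcenter A B C) A ^ 2 = dst (circumcenter A B C) C ^ 2 := by
  obtain ⟨hB, hC⟩ := two_mul_dot_circumcenter h
  constructor
  · linarith [dst_sq_sub_dst_sq (circumcenter A B C) A B]
  · linarith [dst_sq_sub_dst_sq (circumcenter A B C) A C]

lemma circumcenter_eq_of_dst_sq_eq {A B C Y : Pt} (h : cross A B C ≠ 0)
    (hB : dst Y A ^ 2 = dst Y B ^ 2) (hC : dst Y A ^ 2 = dst Y C ^ 2) :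
    circumcenter A B C = Y := by
  obtain ⟨hXB, hXC⟩ := two_mul_dot_circumcenter h
  refine eq_of_dot_sub_eq h ?_ ?_
  · linarith [dst_sq_sub_dst_sq Y A B]
  · linarith [dst_sq_sub_dst_sq Y A C]

lemma inva_one_zero (p : Pt) : inva 1 0 p = (p.1 ^ 2 + p.2 ^ 2)⁻¹ • p := by
  simp [inva]

lemma inva_one_zero_involutive : Function.Involutive (inva 1 (0 : Pt)) := by
  intro p
  rcases eq_or_ne (p.1 ^ 2 + p.2 ^ 2) 0 with hp | hp
  · -- `inva 1 0 0 = 0` since `1 / 0 = 0`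
    obtain rfl : p = 0 := eq_of_sub_sq_add_sub_sq_eq_zero (by simpa using hp)
    simp [inva]
  · rw [inva_one_zero, inva_one_zero, smul_smul]
    simp only [Prod.smul_fst, Prod.smul_snd, smul_eq_mul]
    convert one_smul ℝ p
    field_simp

lemma dst_inva_sq {X P : Pt} {k : ℝ} (hk : dst 0 X ^ 2 - dst X P ^ 2 = k) (hk0 : k ≠ 0) :
    dst (k⁻¹ • X) (inva 1 0 P) ^ 2 = dst X P ^ 2 / k ^ 2 := by
  rw [dst_sq, dst_sq] at hk
  rw [inva_one_zero, dst_sq, dst_sq]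
  simp only [Prod.fst_zero, Prod.snd_zero, Prod.smul_fst, Prod.smul_snd, smul_eq_mul] at hk ⊢
  have hP : P.1 ^ 2 + P.2 ^ 2 ≠ 0 := by
    intro hP
    obtain rfl : P = 0 := eq_of_sub_sq_add_sub_sq_eq_zero (by simpa using hP)
    exact hk0 (by simpa using hk.symm)
  field_simp
  linear_combination (P.1 ^ 2 + P.2 ^ 2) * (P.1 ^ 2 + P.2 ^ 2 - k) * hk

theorem circumcenter_inva {A B C : Pt} {k : ℝ} (h : cross A B C ≠ 0)
    (hk : dst 0 (circumcenter A B C) ^ 2 - dst (circumcenter A B C) A ^ 2 = k) (hk0 : k ≠ 0) :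
    circumcenter (inva 1 0 A) (inva 1 0 B) (inva 1 0 C) = k⁻¹ • circumcenter A B C := by
  obtain ⟨hXB, hXC⟩ := dst_circumcenter_sq h
  obtain ⟨hAB, hBC, hCA⟩ := ne_of_cross_ne_zero h
  have hA := dst_inva_sq hk hk0
  have hB := dst_inva_sq (hXB ▸ hk) hk0
  have hC := dst_inva_sq (hXC ▸ hk) hk0
  have hinj := inva_one_zero_involutive.injective
  have hAB' : dst (k⁻¹ • circumcenter A B C) (inva 1 0 A) ^ 2 =
      dst (k⁻¹ • circumcenter A B C) (inva 1 0 B) ^ 2 := by rw [hA, hB, hXB]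
  have hAC' : dst (k⁻¹ • circumcenter A B C) (inva 1 0 A) ^ 2 =
      dst (k⁻¹ • circumcenter A B C) (inva 1 0 C) ^ 2 := by rw [hA, hC, hXC]
  exact circumcenter_eq_of_dst_sq_eq
    (cross_ne_zero_of_dst_sq_eq (hinj.ne hAB) (hinj.ne hBC) (hinj.ne hCA) hAB' hAC') hAB' hAC'

lemma cross_ne_zero_of_onEllipse {a b : ℝ} (ha : a ≠ 0) (hb : b ≠ 0) {A B C : Pt}
    (hA : onEllipse a b A) (hB : onEllipse a b B) (hC : onEllipse a b C)
    (hAB : A ≠ B) (hBC : B ≠ C) (hCA : C ≠ A) : cross A B C ≠ 0 := by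
  let f : Pt → Pt := fun p => (p.1 / a, p.2 / b)
  have hf : f.Injective := by
    intro p q hpq
    simp only [f, Prod.mk.injEq, div_left_inj' ha, div_left_inj' hb] at hpq
    exact Prod.ext hpq.1 hpq.2
  have hcircle : ∀ p, onEllipse a b p → dst 0 (f p) ^ 2 = 1 := by
    intro p hp
    rw [dst_sq, ← hp]
    simp only [f, Prod.fst_zero, Prod.snd_zero]
    ring
  have hcross : cross (f A) (f B) (f C) = cross A B C / (a * b) := by
    simp only [cross, f]
    field_simp
  have hfcross := cross_ne_zero_of_dst_sq_eq (Y := 0) (hf.ne hAB) (hf.ne hBC) (hf.ne hCA)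
    (by rw [hcircle A hA, hcircle B hB]) (by rw [hcircle A hA, hcircle C hC])
  rw [hcross] at hfcross
  exact fun h => hfcross (by rw [h, zero_div])

end BilliardInv

open BilliardInv Real

/-- given that the power of the billiard center w.r.t. the
circumcircle of every 3-periodic equals −δ, the circumcenter of the
center-inversive triangle equals −X₃/δ, i.e. the locus of X₃⊙ is the locus of
X₃ scaled by 1/δ. -/
theorem center_inversive_circumcenter (a b : ℝ) (hab : a > b) (hb : b > 0)
    (T : Orbit3 a b)
    (hpow :
      let X3 := circumcenter T.P1 T.P2 T.P3
      (dst ((0 : ℝ), (0 : ℝ)) X3) ^ 2 - (dst X3 T.P1) ^ 2 =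
        -Real.sqrt (a ^ 4 - a ^ 2 * b ^ 2 + b ^ 4)) :
    let δ : ℝ := Real.sqrt (a ^ 4 - a ^ 2 * b ^ 2 + b ^ 4)
    let O : Pt := (0, 0)
    circumcenter (inva 1 O T.P1) (inva 1 O T.P2) (inva 1 O T.P3) =
      (-δ⁻¹) • circumcenter T.P1 T.P2 T.P3 := by
  intro δ O
  have ha : 0 < a := hb.trans hab
  have hδ : 0 < δ := Real.sqrt_pos.mpr (by nlinarith [sq_nonneg (a ^ 2 - b ^ 2), mul_pos ha hb])
  have hcross := cross_ne_zero_of_onEllipse ha.ne' hb.ne' T.h1 T.h2 T.h3 T.d12 T.d23 T.d31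
  rw [← inv_neg]
  exact circumcenter_inva hcross hpow (neg_ne_zero.mpr hδ.ne')
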